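/- For every positive integer n and real q with 0 < q < 1, (2/π) ∫₀^∞ ∏_{k=1}^n 1/(x² + q^(2k)) dx = q^(−n²) ∏_{j=1}^{n−1} (1 − q^(2j−1))/(1 − q^(2j)). -/

import Mathlib

/-!
Partial fractions in the two extreme factors `k = 1` and `k = n + 1` write the `(n+1)`-fold
integrand as a difference of two `n`-fold ones, divided by `q² - q^(2n+2)`: one is the `n`-fold
integrand itself, the other is the integrand with factors `k = 2, …, n + 1`, which the
substitution `x = q y` turns back into `q^(-2n)` times the `n`-fold one. The integral therefore
satisfies a first-order recursion whose ratio `q^(-(2n+1)) (1 - q^(2n-1)) / (1 - q^(2n))` is that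
of consecutive right-hand sides, and the case `n = 1` is `∫₀^∞ dx / (x² + q²) = π / (2q)`.
-/

open MeasureTheory Real Finset

theorem inv_sq_add_sq_eq {a : ℝ} (ha : a ≠ 0) (x : ℝ) :
    (x ^ 2 + a ^ 2)⁻¹ = a⁻¹ ^ 2 * (1 + (a⁻¹ * x) ^ 2)⁻¹ := by
  field_simp
  ring

theorem integrable_inv_sq_add_sq {a : ℝ} (ha : a ≠ 0) :
    Integrable fun x : ℝ => (x ^ 2 + a ^ 2)⁻¹ := by
  simp_rw [inv_sq_add_sq_eq ha]
  exact (integrable_inv_one_add_sq.comp_mul_left' (inv_ne_zero ha)).const_mul _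

theorem integrable_inv_sq_add {c : ℝ} (hc : 0 < c) :
    Integrable fun x : ℝ => (x ^ 2 + c)⁻¹ := by
  simpa [sq_sqrt hc.le] using integrable_inv_sq_add_sq (sqrt_pos.2 hc).ne'

theorem integral_Ioi_inv_sq_add_sq {a : ℝ} (ha : 0 < a) :
    ∫ x in Set.Ioi 0, (x ^ 2 + a ^ 2)⁻¹ = π / (2 * a) := by
  simp_rw [inv_sq_add_sq_eq ha.ne']
  rw [integral_const_mul, integral_comp_mul_left_Ioi (fun y => (1 + y ^ 2)⁻¹) 0 (inv_pos.2 ha),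
    mul_zero, integral_Ioi_inv_one_add_sq, arctan_zero, sub_zero, smul_eq_mul]
  field_simp

theorem integrable_prod_inv_sq_add {ι : Type*} {s : Finset ι} (hs : s.Nonempty) {c : ι → ℝ}
    (hc : ∀ i ∈ s, 0 < c i) : Integrable fun x : ℝ => ∏ i ∈ s, (x ^ 2 + c i)⁻¹ := by
  classical
  obtain ⟨i₀, hi₀⟩ := hs
  have hpos : ∀ x, ∀ i ∈ s, 0 < x ^ 2 + c i := fun x i hi => by positivity [hc i hi]
  refine ((integrable_inv_sq_add (hc i₀ hi₀)).mul_const (∏ i ∈ s.erase i₀, (c i)⁻¹)).mono'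
    ?_ (.of_forall fun x => ?_)
  · exact (continuous_finsetProd s fun i hi =>
      (by fun_prop : Continuous fun x : ℝ => x ^ 2 + c i).inv₀ fun x => (hpos x i hi).ne')
      |>.aestronglyMeasurable
  rw [norm_of_nonneg (prod_nonneg fun i hi => (inv_pos.2 (hpos x i hi)).le),
    ← mul_prod_erase s _ hi₀]
  gcongr with i hi
  · exact (inv_pos.2 (hpos x i₀ hi₀)).le
  · exact fun i hi => (inv_pos.2 (hpos x i (mem_of_mem_erase hi))).le
  · exact hc i (mem_of_mem_erase hi)
  · exact le_add_of_nonneg_left (sq_nonneg x)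

theorem prod_Icc_inv_sq_add_eq_sub_div {c : ℕ → ℝ} (hc : ∀ k, 0 < c k) {a b : ℕ} (hab : a ≤ b)
    (hne : c a ≠ c (b + 1)) (x : ℝ) :
    ∏ k ∈ Icc a (b + 1), (x ^ 2 + c k)⁻¹ =
      (∏ k ∈ Icc (a + 1) (b + 1), (x ^ 2 + c k)⁻¹ - ∏ k ∈ Icc a b, (x ^ 2 + c k)⁻¹) /
        (c a - c (b + 1)) := by
  rw [← insert_Icc_add_one_left_eq_Icc (by omega : a ≤ b + 1),
    ← insert_Icc_add_one_left_eq_Icc hab, prod_insert (by simp), prod_insert (by simp),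
    prod_Icc_succ_top (by omega : a + 1 ≤ b + 1)]
  have ha : x ^ 2 + c a ≠ 0 := by positivity [hc a]
  have hb : x ^ 2 + c (b + 1) ≠ 0 := by positivity [hc (b + 1)]
  have hab' : c a - c (b + 1) ≠ 0 := sub_ne_zero.2 hne
  field_simp
  ring

theorem prod_Icc_two_succ_inv_mul_sq_add (q : ℝ) (n : ℕ) (y : ℝ) :
    ∏ k ∈ Icc 2 (n + 1), ((q * y) ^ 2 + q ^ (2 * k))⁻¹ =
      (q ^ (2 * n))⁻¹ * ∏ k ∈ Icc 1 n, (y ^ 2 + q ^ (2 * k))⁻¹ := by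
  have hfac : ∀ k : ℕ, ((q * y) ^ 2 + q ^ (2 * (k + 1)))⁻¹ = (q ^ 2)⁻¹ * (y ^ 2 + q ^ (2 * k))⁻¹ :=
    fun k => by rw [← mul_inv]; ring_nf
  rw [← map_add_right_Icc 1 n 1, prod_map]
  simp only [addRightEmbedding_apply, hfac, prod_mul_distrib, prod_const, Nat.card_Icc,
    add_tsub_cancel_right, ← pow_mul, inv_pow]

noncomputable def qPowerIntegral (q : ℝ) (n : ℕ) : ℝ :=
  ∫ x in Set.Ioi (0 : ℝ), ∏ k ∈ Icc 1 n, (x ^ 2 + q ^ (2 * k))⁻¹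

section

variable {q : ℝ}

theorem qPowerIntegral_one (hq : 0 < q) : qPowerIntegral q 1 = π / (2 * q) := by
  simp only [qPowerIntegral, Icc_self, prod_singleton, mul_one, pow_two q]
  rw [← pow_two, integral_Ioi_inv_sq_add_sq hq]

theorem integral_Ioi_prod_Icc_two_succ (hq : 0 < q) (n : ℕ) :
    ∫ x in Set.Ioi (0 : ℝ), ∏ k ∈ Icc 2 (n + 1), (x ^ 2 + q ^ (2 * k))⁻¹ =
      q * (q ^ (2 * n))⁻¹ * qPowerIntegral q n := by
  have h := integral_comp_mul_left_Ioi
    (fun x => ∏ k ∈ Icc 2 (n + 1), (x ^ 2 + q ^ (2 * k))⁻¹) 0 hq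
  simp only [prod_Icc_two_succ_inv_mul_sq_add, integral_const_mul, mul_zero, smul_eq_mul] at h
  rw [qPowerIntegral, ← mul_inv_cancel_left₀ hq.ne' (∫ x in Set.Ioi (0 : ℝ), _), ← h]
  ring

theorem qPowerIntegral_succ (h0 : 0 < q) (h1 : q < 1) {n : ℕ} (hn : 1 ≤ n) :
    qPowerIntegral q (n + 1) =
      (q ^ (2 * n + 1))⁻¹ * ((1 - q ^ (2 * n - 1)) / (1 - q ^ (2 * n))) * qPowerIntegral q n := by
  have hlt : q ^ (2 * (n + 1)) < q ^ (2 * 1) := pow_lt_pow_right_of_lt_one₀ h0 h1 (by omega)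
  have hsplit := fun x : ℝ => prod_Icc_inv_sq_add_eq_sub_div (c := fun k => q ^ (2 * k))
    (fun k => pow_pos h0 _) hn hlt.ne' x
  have hint : ∀ a b, a ≤ b → Integrable fun x : ℝ => ∏ k ∈ Icc a b, (x ^ 2 + q ^ (2 * k))⁻¹ :=
    fun a b hab => integrable_prod_inv_sq_add (nonempty_Icc.2 hab) fun k _ => pow_pos h0 _
  rw [qPowerIntegral]
  simp only [hsplit]
  rw [integral_div, integral_sub (hint _ _ (by omega)).integrableOn (hint _ _ hn).integrableOn,
    integral_Ioi_prod_Icc_two_succ h0, ← qPowerIntegral]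
  obtain ⟨m, rfl⟩ := Nat.exists_eq_add_of_le hn
  have hden : q ^ (2 * 1) - q ^ (2 * (1 + m + 1)) ≠ 0 := (sub_pos.2 hlt).ne'
  have h2m : 1 - q ^ (2 * (1 + m)) ≠ 0 := (sub_pos.2 (pow_lt_one₀ h0.le h1 (by omega))).ne'
  rw [show 2 * (1 + m) - 1 = 2 * m + 1 by omega]
  field_simp
  ring

end

theorem integral_prod_q_powers (n : ℕ) (hn : 0 < n) (q : ℝ) (h0 : 0 < q) (h1 : q < 1) :
    (2 / π) * ∫ x in Set.Ioi (0:ℝ), ∏ k ∈ Finset.Icc 1 n, (x ^ 2 + q ^ (2 * k))⁻¹ =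
      q ^ (-(n ^ 2 : ℤ)) * ∏ j ∈ Finset.Icc 1 (n - 1), (1 - q ^ (2 * j - 1)) / (1 - q ^ (2 * j)) := by
  change 2 / π * qPowerIntegral q n = _
  induction n, hn using Nat.le_induction with
  | base =>
    rw [qPowerIntegral_one h0]
    field_simp
    simp [h0.ne']
  | succ n hn ih =>
    have hpow : q ^ (-((n + 1 : ℕ) ^ 2 : ℤ)) = (q ^ (2 * n + 1))⁻¹ * q ^ (-(n ^ 2 : ℤ)) := by
      rw [← zpow_natCast, ← zpow_neg, ← zpow_add₀ h0.ne']
      congr 1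
      push_cast
      ring
    obtain ⟨m, rfl⟩ : ∃ m, n = m + 1 := ⟨n - 1, by omega⟩
    rw [add_tsub_cancel_right] at ih
    rw [qPowerIntegral_succ h0 h1 hn, hpow, add_tsub_cancel_right, prod_Icc_succ_top (by omega),
      mul_left_comm, ih]
    ring
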